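/- Let p be a prime and R a perfect 𝔽_p-algebra. The natural ring homomorphism from the p-adic completion lim_ν ℤR/p^ν ℤR of ℤR to the I-adic completion C(R) = lim_ν ℤR/I^ν is surjective, and its kernel is the inverse limit lim_ν I^ν/p^ν ℤR (of the images of I^ν in ℤR/p^ν ℤR). -/

import Mathlib

/-!
Write `J = pℤR`. Perfectness gives `I ⊆ J + I²`: with `a = a'^p` and `b = b'^p`, the element
`[a] + [b] - [a + b]` is congruent modulo `p` to `h^p` with `h = [a'] + [b'] - [a' + b'] ∈ I`, so
`r ↦ [r]` is additive modulo `J + I²` and the quotient map `ℤR → ℤR/(J + I²)` factors through `π`.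
Since `J ⊆ I`, this yields `I^ν ⊆ J^ν + I^(ν+1)` for all `ν`, which lets one lift any
`I`-adically compatible family step by step to a `J`-adically compatible one. The description of
the kernel holds for any pair `J ⊆ I`.
-/

set_option synthInstance.maxHeartbeats 1000000
set_option maxHeartbeats 1000000

open MonoidAlgebra

/-- `ℤR`: the monoid algebra over `ℤ` of the multiplicative monoid `(R, ·)`. -/
abbrev ZR (R : Type*) [CommRing R] : Type _ := MonoidAlgebra ℤ R

/-- The canonical ring homomorphism `π : ℤR → R`, `Σ n_r [r] ↦ Σ n_r r`. -/
noncomputable def piHom (R : Type*) [CommRing R] : ZR R →+* R :=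
  (MonoidAlgebra.lift ℤ R R (MonoidHom.id R)).toRingHom

/-- The ideal `I = ker (π : ℤR → R)`. -/
noncomputable def Iid (R : Type*) [CommRing R] : Ideal (ZR R) := RingHom.ker (piHom R)

/-- The inverse limit `lim_ν A⧸I^ν` realized as a subring of the product `Π ν, A⧸I^ν`
(families compatible under the canonical factor maps). -/
def Clim (A : Type*) [CommRing A] (I : Ideal A) : Subring (Π ν : ℕ, A ⧸ I ^ ν) where
  carrier := { x | ∀ ⦃m ν : ℕ⦄ (h : m ≤ ν),
    Ideal.Quotient.factor (Ideal.pow_le_pow_right h) (x ν) = x m }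
  zero_mem' := by intro m ν h; simp
  one_mem' := by intro m ν h; simp
  add_mem' := by intro x y hx hy m ν h; simp only [Pi.add_apply, map_add, hx h, hy h]
  mul_mem' := by intro x y hx hy m ν h; simp only [Pi.mul_apply, map_mul, hx h, hy h]
  neg_mem' := by intro x hx m ν h; simp only [Pi.neg_apply, map_neg, hx h]

/-- The projection of the completion `lim_ν A⧸I^ν` onto its `ν`-th level `A⧸I^ν`. -/
def Ceval (A : Type*) [CommRing A] (I : Ideal A) (ν : ℕ) : Clim A I →+* A ⧸ I ^ ν :=
  (Pi.evalRingHom _ ν).comp (Clim A I).subtype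

/-- The canonical map `A → lim_ν A⧸I^ν`. -/
def CofRingHom (A : Type*) [CommRing A] (I : Ideal A) : A →+* Clim A I where
  toFun a := ⟨fun ν => Ideal.Quotient.mk _ a, fun _ _ _ => Ideal.Quotient.factor_mk _ _⟩
  map_one' := rfl
  map_mul' _ _ := rfl
  map_zero' := rfl
  map_add' _ _ := rfl

/-- `C(R)`: the `I`-adic completion of `ℤR`. -/
noncomputable abbrev CR (R : Type*) [CommRing R] : Type _ := Clim (ZR R) (Iid R)

/-- The canonical projection `π̄ : C(R) → R` induced by `π`. -/
noncomputable def CtoR (R : Type*) [CommRing R] : CR R →+* R :=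
  (Ideal.Quotient.lift (Iid R) (piHom R) (fun _ ha => ha)).comp
    (((Ideal.quotEquivOfEq (pow_one (Iid R))).toRingHom).comp (Ceval (ZR R) (Iid R) 1))

/-- For ideals `I ≤ J` of `A`, the natural ring homomorphism `lim_ν A/I^ν → lim_ν A/J^ν`. -/
noncomputable def thetaMap (A : Type*) [CommRing A] (I J : Ideal A) (hIJ : I ≤ J) :
    Clim A I →+* Clim A J :=
  RingHom.codRestrict
    ((RingHom.pi fun ν => (Ideal.Quotient.factor (S := I ^ ν) (T := J ^ ν)
        (Ideal.pow_right_mono hIJ ν)).comp (Pi.evalRingHom _ ν)).comp (Clim A I).subtype)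
    (Clim A J)
    (by
      intro x m ν h
      obtain ⟨a, ha⟩ := Ideal.Quotient.mk_surjective ((x : Π ν, A ⧸ I ^ ν) ν)
      have hm : (x : Π ν, A ⧸ I ^ ν) m = Ideal.Quotient.mk _ a := by
        rw [← x.2 h, ← ha, Ideal.Quotient.factor_mk]
      simp only [RingHom.comp_apply, RingHom.pi_apply, Pi.evalRingHom_apply, Subring.coe_subtype]
      rw [← ha, hm, Ideal.Quotient.factor_mk, Ideal.Quotient.factor_mk,
        Ideal.Quotient.factor_mk])

lemma p_mem_Iid (p : ℕ) (R : Type*) [CommRing R] [CharP R p] : (p : ZR R) ∈ Iid R := by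
  have h : piHom R (p : ZR R) = 0 := by
    rw [map_natCast]; exact CharP.cast_eq_zero R p
  exact RingHom.mem_ker.mpr h

lemma spanP_le_Iid (p : ℕ) (R : Type*) [CommRing R] [CharP R p] :
    Ideal.span {(p : ZR R)} ≤ Iid R :=
  (Ideal.span_le).mpr (Set.singleton_subset_iff.mpr (p_mem_Iid p R))

section Completion

variable {A : Type*} [CommRing A]

lemma mem_Clim_of_factor_succ {I : Ideal A} {x : Π ν : ℕ, A ⧸ I ^ ν}
    (hx : ∀ ν, Ideal.Quotient.factor (Ideal.pow_le_pow_right ν.le_succ) (x (ν + 1)) = x ν) :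
    x ∈ Clim A I := fun _ _ h =>
  (Ideal.Quotient.eq_factor_of_eq_factor_succ (fun _ _ h => Ideal.pow_le_pow_right h) x
    (fun ν => (hx ν).symm) h).symm

lemma thetaMap_apply {I J : Ideal A} (hIJ : I ≤ J) (x : Clim A I) (ν : ℕ) :
    (thetaMap A I J hIJ x : Π ν : ℕ, A ⧸ J ^ ν) ν =
      Ideal.Quotient.factor (Ideal.pow_right_mono hIJ ν) ((x : Π ν : ℕ, A ⧸ I ^ ν) ν) :=
  rfl

lemma thetaMap_eq_zero_iff {I J : Ideal A} (hIJ : I ≤ J) (x : Clim A I) :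
    thetaMap A I J hIJ x = 0 ↔
      ∀ ν : ℕ, (x : Π ν : ℕ, A ⧸ I ^ ν) ν ∈ Ideal.map (Ideal.Quotient.mk (I ^ ν)) (J ^ ν) := by
  simp only [← Ideal.Quotient.factor_ker (Ideal.pow_right_mono hIJ _), RingHom.mem_ker,
    Subtype.ext_iff, funext_iff]
  rfl

variable {I J : Ideal A}

lemma pow_le_pow_sup_pow_succ (hIJ : I ≤ J) (hJ : J ≤ I ⊔ J ^ 2) (ν : ℕ) :
    J ^ ν ≤ I ^ ν ⊔ J ^ (ν + 1) := by
  induction ν with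
  | zero => simp [Ideal.one_eq_top]
  | succ ν ih =>
    calc J ^ (ν + 1) = J * J ^ ν := pow_succ' J ν
      _ ≤ (I ⊔ J ^ 2) * (I ^ ν ⊔ J ^ (ν + 1)) := Ideal.mul_mono hJ ih
      _ ≤ I ^ (ν + 1) ⊔ J ^ (ν + 2) := by
        rw [Ideal.sup_mul, Ideal.mul_sup, Ideal.mul_sup]
        refine sup_le (sup_le ?_ ?_) (sup_le ?_ ?_)
        · exact le_sup_of_le_left (pow_succ' I ν).ge
        · refine le_sup_of_le_right ((Ideal.mul_mono_left hIJ).trans ?_)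
          rw [← pow_succ']
        · refine le_sup_of_le_right ((Ideal.mul_mono_right (Ideal.pow_right_mono hIJ ν)).trans ?_)
          rw [← pow_add, add_comm]
        · rw [← pow_add]
          exact le_sup_of_le_right (Ideal.pow_le_pow_right (by omega))

lemma exists_lift_succ (hgr : ∀ ν, J ^ ν ≤ I ^ ν ⊔ J ^ (ν + 1))
    (y : Clim A J) {ν : ℕ} {b : A}
    (hb : Ideal.Quotient.mk (J ^ ν) b = (y : Π ν : ℕ, A ⧸ J ^ ν) ν) :
    ∃ b' : A, Ideal.Quotient.mk (J ^ (ν + 1)) b' = (y : Π ν : ℕ, A ⧸ J ^ ν) (ν + 1) ∧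
      b' - b ∈ I ^ ν := by
  obtain ⟨a, ha⟩ := Ideal.Quotient.mk_surjective ((y : Π ν : ℕ, A ⧸ J ^ ν) (ν + 1))
  have hab : a - b ∈ J ^ ν := by
    rw [← Ideal.Quotient.eq, hb, ← y.2 ν.le_succ, ← ha, Ideal.Quotient.factor_mk]
  obtain ⟨u, hu, v, hv, huv⟩ := Submodule.mem_sup.mp (hgr ν hab)
  refine ⟨a - v, ?_, ?_⟩
  · rw [map_sub, ha, Ideal.Quotient.eq_zero_iff_mem.mpr hv, sub_zero]
  · rwa [sub_right_comm, ← huv, add_sub_cancel_right]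

theorem thetaMap_surjective (hIJ : I ≤ J) (hgr : ∀ ν, J ^ ν ≤ I ^ ν ⊔ J ^ (ν + 1)) :
    Function.Surjective (thetaMap A I J hIJ) := by
  intro y
  set y' : Π ν : ℕ, A ⧸ J ^ ν := (y : Π ν : ℕ, A ⧸ J ^ ν)
  choose next hnext_mk hnext_sub using
    fun ν (b : {b : A // Ideal.Quotient.mk (J ^ ν) b = y' ν}) => exists_lift_succ hgr y b.2
  obtain ⟨b₀, hb₀⟩ := Ideal.Quotient.mk_surjective (y' 0)
  let b : ∀ ν, {b : A // Ideal.Quotient.mk (J ^ ν) b = y' ν} :=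
    fun ν => Nat.rec ⟨b₀, hb₀⟩ (fun ν b => ⟨next ν b, hnext_mk ν b⟩) ν
  refine ⟨⟨fun ν => Ideal.Quotient.mk (I ^ ν) (b ν).1, mem_Clim_of_factor_succ fun ν => ?_⟩, ?_⟩
  · rw [Ideal.Quotient.factor_mk, Ideal.Quotient.eq]
    exact hnext_sub ν (b ν)
  · ext1
    funext ν
    rw [thetaMap_apply]
    exact (Ideal.Quotient.factor_mk _ _).trans (b ν).2

end Completion

section Perfect

variable {R : Type*} [CommRing R]

lemma Iid_le_ker_of_map_single_add {Q : Type*} [CommRing Q] (f : ZR R →+* Q)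
    (hadd : ∀ a b : R, f (single (a + b) 1) = f (single a 1) + f (single b 1)) :
    Iid R ≤ RingHom.ker f := by
  let g : R →+* Q :=
    { toFun := fun a => f (single a 1)
      map_one' := f.map_one
      map_mul' := fun a b => by rw [← map_mul, single_mul_single, one_mul]
      map_zero' := by simpa using hadd 0 0
      map_add' := hadd }
  have hfg : f = g.comp (piHom R) :=
    ringHom_ext' (RingHom.ext_int _ _) (MonoidHom.ext fun a => by simp [g, piHom, lift_single])
  intro x hx
  rw [RingHom.mem_ker, hfg, RingHom.comp_apply, hx, map_zero]

lemma Iid_le_span_sup_sq (p : ℕ) [hp : Fact p.Prime] [CharP R p]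
    (hfrob : Function.Surjective fun x : R => x ^ p) :
    Iid R ≤ Ideal.span {(p : ZR R)} ⊔ Iid R ^ 2 := by
  set K := Ideal.span {(p : ZR R)} ⊔ Iid R ^ 2
  have hp0 : Ideal.Quotient.mk K p = 0 :=
    Ideal.Quotient.eq_zero_iff_mem.mpr (Ideal.mem_sup_left (Ideal.mem_span_singleton_self _))
  refine (Iid_le_ker_of_map_single_add (Ideal.Quotient.mk K) fun a b => ?_).trans Ideal.mk_ker.le
  obtain ⟨a', rfl⟩ := hfrob a
  obtain ⟨b', rfl⟩ := hfrob b
  set h : ZR R := single a' 1 + single b' 1 - single (a' + b') 1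
  have hh : h ^ p ∈ K := by
    refine Ideal.mem_sup_right (Ideal.pow_le_pow_right hp.out.two_le (Ideal.pow_mem_pow ?_ p))
    simp [h, Iid, piHom, lift_single]
  have hsum : single (a' + b') 1 + h = single a' 1 + single b' 1 := add_sub_cancel _ _
  obtain ⟨r, hr⟩ := exists_add_pow_prime_eq hp.out (single (a' + b') 1 : ZR R) h
  obtain ⟨s, hs⟩ := exists_add_pow_prime_eq hp.out (single a' 1 : ZR R) (single b' 1)
  have key := congrArg (fun x => Ideal.Quotient.mk K (x ^ p)) hsum
  simp only [hr, hs, map_add, map_mul, hp0, zero_mul, add_zero, single_pow, one_pow, add_pow_char,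
    Ideal.Quotient.eq_zero_iff_mem.mpr hh] at key
  exact key

end Perfect

/-- Let `p` be a prime and `R` a perfect `𝔽_p`-algebra. The natural ring
homomorphism `θ` from the `p`-adic completion `lim_ν ℤR/p^ν·ℤR` of `ℤR` to the `I`-adic
completion `C(R) = lim_ν ℤR/I^ν` is surjective, and its kernel is the inverse limit
`lim_ν I^ν/p^ν·ℤR`: an element lies in `ker θ` iff each of its components lies in the image
of `I^ν` in `ℤR/p^ν·ℤR`. -/
theorem statement16 (p : ℕ) [Fact p.Prime] (R : Type*) [CommRing R] [CharP R p]
    (hperf : Function.Bijective fun x : R => x ^ p) :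
    Function.Surjective (thetaMap (ZR R) (Ideal.span {(p : ZR R)}) (Iid R) (spanP_le_Iid p R)) ∧
    ∀ x : Clim (ZR R) (Ideal.span {(p : ZR R)}),
      thetaMap (ZR R) (Ideal.span {(p : ZR R)}) (Iid R) (spanP_le_Iid p R) x = 0 ↔
      ∀ ν : ℕ, (x : Π ν : ℕ, ZR R ⧸ (Ideal.span {(p : ZR R)}) ^ ν) ν ∈
        Ideal.map (Ideal.Quotient.mk ((Ideal.span {(p : ZR R)}) ^ ν)) (Iid R ^ ν) :=
  ⟨thetaMap_surjective _ (pow_le_pow_sup_pow_succ (spanP_le_Iid p R)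
      (Iid_le_span_sup_sq p hperf.2)), thetaMap_eq_zero_iff _⟩
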